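/- Let G be a quasi-acyclic 2-path-bounded oriented graph without multiple edges and triangles, and let R be any complete system of relations for G. Let R_L ⊆ R be the subset of relations in which every edge occurring on either side is a loop. Then |R_L| ≥ 𝔏(G), the number of loops of G. -/

import Mathlib

/-- An oriented graph: finite nonempty sets of vertices and edges with
origin and tail maps. -/
structure OrientedGraph where
  V : Type
  E : Type
  [fintypeV : Fintype V]
  [fintypeE : Fintype E]
  [nonemptyV : Nonempty V]
  [nonemptyE : Nonempty E]
  o : E → V
  t : E → V

attribute [instance] OrientedGraph.fintypeV OrientedGraph.fintypeE
  OrientedGraph.nonemptyV OrientedGraph.nonemptyE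

namespace OrientedGraph

variable (G : OrientedGraph)

/-- `G.IsPath p u v` : the edge sequence `p` is a path from `u` to `v`
(consecutive edges are composable; paths of length 0 at any vertex are allowed). -/
def IsPath (p : List G.E) (u v : G.V) : Prop :=
  List.Chain' (fun e f => G.t e = G.o f) p ∧
  ((p = [] ∧ u = v) ∨
    ∃ h : p ≠ [], u = G.o (p.head h) ∧ v = G.t (p.getLast h))

/-- The label of an edge sequence: the product of the labels of its edges
(the empty sequence maps to `1`). -/
def labelProd {M : Type} [Monoid M] (l : G.E → M) (s : List G.E) : M :=
  (s.map l).prod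

/-- The diagram `(G, l)` is commutative: any two paths with the same origin and
the same tail have equal labels. -/
def IsCommutative {M : Type} [Monoid M] (l : G.E → M) : Prop :=
  ∀ (u v : G.V) (p₁ p₂ : List G.E),
    G.IsPath p₁ u v → G.IsPath p₂ u v → G.labelProd l p₁ = G.labelProd l p₂

/-- A complete system of relations for `G`: for every monoid `M` and every
labeling `l : E → M`, the diagram `(G, l)` is commutative iff all relations hold. -/
def IsComplete (R : Finset (List G.E × List G.E)) : Prop :=
  ∀ (M : Type) [Monoid M], ∀ l : G.E → M,
    G.IsCommutative l ↔ ∀ r ∈ R, G.labelProd l r.1 = G.labelProd l r.2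

/-- A minimal complete system of relations: no proper subset is complete. -/
def IsMinimalComplete (R : Finset (List G.E × List G.E)) : Prop :=
  G.IsComplete R ∧ ∀ R' : Finset (List G.E × List G.E), R' ⊂ R → ¬ G.IsComplete R'

/-- The commutativity rank `η(G)`: the minimal cardinality of a complete
system of relations for `G`. -/
noncomputable def eta : ℕ :=
  sInf {n : ℕ | ∃ R : Finset (List G.E × List G.E), G.IsComplete R ∧ R.card = n}

/-- `S'` is obtained from `S` by one multiplication. -/
def MulStep (S S' : Set (List G.E)) : Prop :=
  ∃ s ∈ S, ∃ s' ∈ S, S' = S ∪ {s ++ s'}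

/-- `G.mCost S S'` : the minimal number of multiplications needed to obtain `S'`
from `S` (`⊤` if impossible). -/
noncomputable def mCost (S S' : Set (List G.E)) : ℕ∞ :=
  sInf {k : ℕ∞ | ∃ n : ℕ, k = n ∧ ∃ f : ℕ → Set (List G.E),
    f 0 = S ∧ f n = S' ∧ ∀ i < n, G.MulStep (f i) (f (i + 1))}

/-- `S_R`: the set of all edge sequences appearing in the relations of `R`. -/
def relSet (R : Finset (List G.E × List G.E)) : Set (List G.E) :=
  {s | ∃ r ∈ R, s = r.1 ∨ s = r.2}

/-- `ℰ`: the empty sequence together with all one-edge sequences. -/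
def baseSet : Set (List G.E) :=
  {s | s = [] ∨ ∃ e : G.E, s = [e]}

/-- `m(R)`: the minimal number of multiplications needed to build all sequences
appearing in `R`, starting from `ℰ`. -/
noncomputable def mRel (R : Finset (List G.E × List G.E)) : ℕ∞ :=
  sInf {k : ℕ∞ | ∃ S : Set (List G.E), G.relSet R ⊆ S ∧ k = G.mCost G.baseSet S}

/-- The multiplication rank `ν(G)`. -/
noncomputable def nu : ℕ∞ :=
  sInf {k : ℕ∞ | ∃ R : Finset (List G.E × List G.E), G.IsComplete R ∧ k = G.mRel R}

/-- A 4-tuple of edges `(a, b, c, d)` forms a rhomboid. -/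
def IsRhomboid (r : G.E × G.E × G.E × G.E) : Prop :=
  G.o r.1 = G.o r.2.2.1 ∧ G.t r.2.1 = G.t r.2.2.2 ∧
  G.t r.1 = G.o r.2.1 ∧ G.t r.2.2.1 = G.o r.2.2.2 ∧
  G.o r.1 ≠ G.t r.1 ∧ G.o r.1 ≠ G.o r.2.2.2 ∧ G.o r.1 ≠ G.t r.2.2.2 ∧
  G.t r.1 ≠ G.o r.2.2.2 ∧ G.t r.1 ≠ G.t r.2.2.2 ∧ G.o r.2.2.2 ≠ G.t r.2.2.2

/-- Two rhomboids `(a, b, c, d)` and `(a', b', c', d')` are disjoint. -/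
def RhDisjoint (r r' : G.E × G.E × G.E × G.E) : Prop :=
  (r.1 ≠ r'.1 ∨ r.2.1 ≠ r'.2.1) ∧
  (r.1 ≠ r'.2.2.1 ∨ r.2.1 ≠ r'.2.2.2) ∧
  (r.2.2.1 ≠ r'.2.2.1 ∨ r.2.2.2 ≠ r'.2.2.2) ∧
  (r.2.2.1 ≠ r'.1 ∨ r.2.2.2 ≠ r'.2.1)

/-- `𝔯𝔥(G)`: the maximal cardinality of a family of pairwise disjoint rhomboids in `G`. -/
noncomputable def rhNum : ℕ :=
  sSup {n : ℕ | ∃ F : Finset (G.E × G.E × G.E × G.E),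
    (∀ r ∈ F, G.IsRhomboid r) ∧
    (∀ r ∈ F, ∀ r' ∈ F, r ≠ r' → G.RhDisjoint r r') ∧ F.card = n}

/-- `𝔏(G)`: the number of loops of `G`. -/
noncomputable def loopCount : ℕ :=
  Nat.card {e : G.E // G.o e = G.t e}

/-- `G` is quasi-acyclic: no directed cycle visiting two or more distinct vertices. -/
def QuasiAcyclic : Prop :=
  ∀ u v : G.V, u ≠ v →
    ∀ p q : List G.E, G.IsPath p u v → G.IsPath q v u → False

/-- `G` is 2-path-bounded: every oriented path avoiding loop edges has length at most 2. -/
def TwoPathBounded : Prop :=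
  ∀ (p : List G.E) (u v : G.V), G.IsPath p u v →
    (∀ e ∈ p, G.o e ≠ G.t e) → p.length ≤ 2

/-- `G` has a pair of multiple edges. -/
def HasMultipleEdges : Prop :=
  ∃ e e' : G.E, e ≠ e' ∧ G.t e = G.t e' ∧ G.o e = G.o e' ∧ G.t e ≠ G.o e

/-- `G` has a triangle. -/
def HasTriangle : Prop :=
  ∃ a b c : G.E, G.o a = G.o b ∧ G.t b = G.o c ∧ G.t c = G.t a ∧
    G.o a ≠ G.t a ∧ G.o b ≠ G.t b ∧ G.o c ≠ G.t c

/-- `G` has no loops. -/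
def NoLoops : Prop := ∀ e : G.E, G.o e ≠ G.t e

/-- Every edge occurring on either side of the relation `r` is a loop. -/
def AllLoops (r : List G.E × List G.E) : Prop :=
  (∀ e ∈ r.1, G.o e = G.t e) ∧ (∀ e ∈ r.2, G.o e = G.t e)

/-- Both sides of the relation `r` contain at least one non-loop edge. -/
def BothSidesNonLoop (r : List G.E × List G.E) : Prop :=
  (∃ e ∈ r.1, G.o e ≠ G.t e) ∧ (∃ e ∈ r.2, G.o e ≠ G.t e)

end OrientedGraph

/-- The triploid `T(n₁, n₂, n₃, n₀, e)`. -/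
def Triploid (n₁ n₂ n₃ n₀ e : ℕ) (hn₁ : 0 < n₁) (he : n₂ * (n₁ + n₃) ≤ e)
    (he₀ : 0 < e) : OrientedGraph where
  V := Fin n₀ ⊕ Fin n₁ ⊕ Fin n₂ ⊕ Fin n₃
  E := (Fin n₁ × Fin n₂) ⊕ (Fin n₂ × Fin n₃) ⊕ Fin (e - n₂ * (n₁ + n₃))
  nonemptyV := ⟨Sum.inr (Sum.inl ⟨0, hn₁⟩)⟩
  nonemptyE := by
    by_cases h : n₂ * (n₁ + n₃) < e
    · exact ⟨Sum.inr (Sum.inr ⟨0, by omega⟩)⟩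
    · have h2 : 0 < n₂ := by
        rcases Nat.eq_zero_or_pos n₂ with h0 | h0
        · exfalso; subst h0; simp at h; omega
        · exact h0
      exact ⟨Sum.inl (⟨0, hn₁⟩, ⟨0, h2⟩)⟩
  o := Sum.elim (fun p => Sum.inr (Sum.inl p.1))
        (Sum.elim (fun p => Sum.inr (Sum.inr (Sum.inl p.1)))
          (fun _ => Sum.inr (Sum.inl ⟨0, hn₁⟩)))
  t := Sum.elim (fun p => Sum.inr (Sum.inr (Sum.inl p.2)))
        (Sum.elim (fun p => Sum.inr (Sum.inr (Sum.inr p.2)))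
          (fun _ => Sum.inr (Sum.inl ⟨0, hn₁⟩)))

/-!
Label every loop `e` by `ofAdd (x e)` in `WithZero (Multiplicative ℚ)` and every other edge
by `0`, for a parameter `x : loops → ℚ`. The label of an edge sequence is then `0` if it meets
a non-loop, and `ofAdd` of the sum of the parameters of its loops otherwise. In a
quasi-acyclic graph a path consists of loops only iff it is closed, so for `x = 0` the diagram
is commutative; completeness of `R` therefore forbids relations with one side made of loops
and the other side meeting a non-loop. For arbitrary `x` the relations outside `R_L` thus hold
automatically, and those in `R_L` are linear equations in `x`. Comparing the empty path with a
single loop shows that the diagram is commutative only for `x = 0`, so these `|R_L|` linear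
forms have trivial common kernel on `ℚ^{loops}`, whence `|R_L| ≥ 𝔏(G)`.
-/

namespace OrientedGraph

variable {G : OrientedGraph}

theorem isPath_nil_iff {u v : G.V} : G.IsPath [] u v ↔ u = v :=
  ⟨fun ⟨_, h⟩ => h.elim And.right fun ⟨hne, _⟩ => absurd rfl hne,
    fun h => ⟨List.isChain_nil, Or.inl ⟨rfl, h⟩⟩⟩

theorem isPath_cons_iff {e : G.E} {p : List G.E} {u v : G.V} :
    G.IsPath (e :: p) u v ↔ u = G.o e ∧ G.IsPath p (G.t e) v := by
  constructor
  · rintro ⟨hchain, h | ⟨hne, hu, hv⟩⟩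
    · simp at h
    refine ⟨by simpa using hu, ?_⟩
    cases p with
    | nil => exact ⟨List.isChain_nil, Or.inl ⟨rfl, by simpa using hv.symm⟩⟩
    | cons f q =>
      obtain ⟨hef, hchain⟩ := List.isChain_cons_cons.mp hchain
      exact ⟨hchain, Or.inr ⟨List.cons_ne_nil _ _, hef, by simpa using hv⟩⟩
  · rintro ⟨rfl, hchain, ⟨rfl, rfl⟩ | ⟨hp, hw, hv⟩⟩
    · exact ⟨List.isChain_singleton _, Or.inr ⟨List.cons_ne_nil _ _, rfl, rfl⟩⟩
    cases p with
    | nil => exact absurd rfl hp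
    | cons f q =>
      exact ⟨List.isChain_cons_cons.mpr ⟨hw, hchain⟩,
        Or.inr ⟨List.cons_ne_nil _ _, rfl, by simpa using hv⟩⟩

theorem isPath_singleton_iff {e : G.E} {u v : G.V} :
    G.IsPath [e] u v ↔ u = G.o e ∧ v = G.t e := by
  rw [isPath_cons_iff, isPath_nil_iff, eq_comm (a := G.t e)]

theorem isPath_append_iff {p q : List G.E} {u v : G.V} :
    G.IsPath (p ++ q) u v ↔ ∃ w, G.IsPath p u w ∧ G.IsPath q w v := by
  induction p generalizing u with
  | nil => simp [isPath_nil_iff]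
  | cons e p ih =>
    simp only [List.cons_append, isPath_cons_iff, ih, and_assoc, exists_and_left]

theorem IsPath.eq_of_forall_loop {p : List G.E} {u v : G.V} (hp : G.IsPath p u v)
    (hloop : ∀ e ∈ p, G.o e = G.t e) : u = v := by
  induction p generalizing u with
  | nil => exact isPath_nil_iff.mp hp
  | cons e p ih =>
    obtain ⟨rfl, hrest⟩ := isPath_cons_iff.mp hp
    rw [hloop e List.mem_cons_self]
    exact ih hrest fun f hf => hloop f (List.mem_cons_of_mem e hf)

theorem QuasiAcyclic.loop_of_mem_of_isPath (hqa : G.QuasiAcyclic) {p : List G.E} {u : G.V}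
    (hp : G.IsPath p u u) {a : G.E} (ha : a ∈ p) : G.o a = G.t a := by
  by_contra hne
  obtain ⟨p₁, p₂, rfl⟩ := List.append_of_mem ha
  obtain ⟨w, hp₁, hp₂⟩ := isPath_append_iff.mp hp
  obtain ⟨rfl, hrest⟩ := isPath_cons_iff.mp hp₂
  exact hqa _ _ hne [a] (p₂ ++ p₁) (isPath_singleton_iff.mpr ⟨rfl, rfl⟩)
    (isPath_append_iff.mpr ⟨u, hrest, hp₁⟩)

variable (G)

abbrev Loop : Type := {e : G.E // G.o e = G.t e}

open scoped Classical in
noncomputable def loopLabel (x : G.Loop → ℚ) (e : G.E) : WithZero (Multiplicative ℚ) :=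
  if h : G.o e = G.t e then ↑(Multiplicative.ofAdd (x ⟨e, h⟩)) else 0

open scoped Classical in
noncomputable def loopCoord (e : G.E) : (G.Loop → ℚ) →ₗ[ℚ] ℚ :=
  if h : G.o e = G.t e then LinearMap.proj ⟨e, h⟩ else 0

noncomputable def loopForm (s : List G.E) : (G.Loop → ℚ) →ₗ[ℚ] ℚ :=
  (s.map G.loopCoord).sum

variable {G}

theorem labelProd_loopLabel_ne_zero_iff {x : G.Loop → ℚ} {s : List G.E} :
    G.labelProd (G.loopLabel x) s ≠ 0 ↔ ∀ e ∈ s, G.o e = G.t e := by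
  simp [labelProd, loopLabel, List.prod_eq_zero_iff]

theorem labelProd_loopLabel_of_forall_loop (x : G.Loop → ℚ) {s : List G.E}
    (hs : ∀ e ∈ s, G.o e = G.t e) :
    G.labelProd (G.loopLabel x) s = ↑(Multiplicative.ofAdd (G.loopForm s x)) := by
  induction s with
  | nil => rfl
  | cons e s ih =>
    have he : G.o e = G.t e := hs e List.mem_cons_self
    simp only [labelProd, loopForm, List.map_cons, List.prod_cons, List.sum_cons] at ih ⊢
    rw [ih fun f hf => hs f (List.mem_cons_of_mem e hf), LinearMap.add_apply, loopLabel,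
      loopCoord, dif_pos he, dif_pos he, LinearMap.proj_apply, ofAdd_add, WithZero.coe_mul]

theorem isCommutative_loopLabel_zero (hqa : G.QuasiAcyclic) :
    G.IsCommutative (G.loopLabel 0) := by
  intro u v p₁ p₂ hp₁ hp₂
  by_cases huv : u = v
  · subst huv
    rw [labelProd_loopLabel_of_forall_loop 0 fun _ he => hqa.loop_of_mem_of_isPath hp₁ he,
      labelProd_loopLabel_of_forall_loop 0 fun _ he => hqa.loop_of_mem_of_isPath hp₂ he,
      map_zero (G.loopForm p₁), map_zero (G.loopForm p₂)]
  · have h₁ := mt hp₁.eq_of_forall_loop huv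
    have h₂ := mt hp₂.eq_of_forall_loop huv
    rw [← labelProd_loopLabel_ne_zero_iff (x := 0), not_not] at h₁ h₂
    rw [h₁, h₂]

theorem eq_zero_of_isCommutative_loopLabel {x : G.Loop → ℚ}
    (hcomm : G.IsCommutative (G.loopLabel x)) : x = 0 := by
  funext ⟨e, he⟩
  have h := hcomm (G.o e) (G.o e) [] [e] (isPath_nil_iff.mpr rfl)
    (isPath_singleton_iff.mpr ⟨rfl, he⟩)
  rw [labelProd_loopLabel_of_forall_loop x (by simp), labelProd_loopLabel_of_forall_loop x
    (by simpa using he)] at h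
  simp only [loopForm, List.map_nil, List.sum_nil, List.map_cons, List.sum_cons, add_zero,
    loopCoord, dif_pos he, LinearMap.zero_apply, LinearMap.proj_apply, ofAdd_zero] at h
  rw [WithZero.coe_inj, eq_comm, ofAdd_eq_one] at h
  exact h

variable {R : Finset (List G.E × List G.E)}

theorem IsComplete.forall_loop_fst_iff_snd (hR : G.IsComplete R) (hqa : G.QuasiAcyclic)
    {r : List G.E × List G.E} (hr : r ∈ R) :
    (∀ e ∈ r.1, G.o e = G.t e) ↔ ∀ e ∈ r.2, G.o e = G.t e := by
  rw [← labelProd_loopLabel_ne_zero_iff (x := 0), ← labelProd_loopLabel_ne_zero_iff (x := 0),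
    (hR _ _).mp (isCommutative_loopLabel_zero hqa) r hr]

theorem IsComplete.labelProd_loopLabel_eq (hR : G.IsComplete R) (hqa : G.QuasiAcyclic)
    {x : G.Loop → ℚ} {r : List G.E × List G.E} (hr : r ∈ R)
    (hx : G.AllLoops r → G.loopForm r.1 x = G.loopForm r.2 x) :
    G.labelProd (G.loopLabel x) r.1 = G.labelProd (G.loopLabel x) r.2 := by
  by_cases h₁ : ∀ e ∈ r.1, G.o e = G.t e
  · have h₂ := (hR.forall_loop_fst_iff_snd hqa hr).mp h₁
    rw [labelProd_loopLabel_of_forall_loop x h₁, labelProd_loopLabel_of_forall_loop x h₂,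
      hx ⟨h₁, h₂⟩]
  · have h₂ := mt (hR.forall_loop_fst_iff_snd hqa hr).mpr h₁
    rw [← labelProd_loopLabel_ne_zero_iff (x := x), not_not] at h₁ h₂
    rw [h₁, h₂]

variable (G R) in
noncomputable def allLoopsRelationMap :
    (G.Loop → ℚ) →ₗ[ℚ] ({r | r ∈ R ∧ G.AllLoops r} → ℚ) :=
  LinearMap.pi fun r => G.loopForm r.1.1 - G.loopForm r.1.2

theorem IsComplete.injective_allLoopsRelationMap (hR : G.IsComplete R)
    (hqa : G.QuasiAcyclic) : Function.Injective (G.allLoopsRelationMap R) := by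
  refine (injective_iff_map_eq_zero _).mpr fun x hx => eq_zero_of_isCommutative_loopLabel ?_
  refine (hR _ _).mpr fun r hr => hR.labelProd_loopLabel_eq hqa hr fun hloop => ?_
  exact sub_eq_zero.mp (congrFun hx ⟨r, hr, hloop⟩)

end OrientedGraph

theorem card_RL_ge_loopCount_general (G : OrientedGraph) (hqa : G.QuasiAcyclic)
    (R : Finset (List G.E × List G.E)) (hR : G.IsComplete R) :
    G.loopCount ≤
      Set.ncard {r : List G.E × List G.E | r ∈ R ∧ G.AllLoops r} := by
  classical
  have hrank := LinearMap.finrank_le_finrank_of_injective (hR.injective_allLoopsRelationMap hqa)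
  rwa [Module.finrank_fintype_fun_eq_card, Module.finrank_fintype_fun_eq_card,
    Fintype.card_eq_nat_card, Fintype.card_eq_nat_card] at hrank

/-- Theorem: for a complete system of relations `R` of a quasi-acyclic, 2-path-bounded
graph without multiple edges and triangles, `|R_L| ≥ 𝔏(G)`, where `R_L` consists of the
relations in which every edge is a loop. -/
theorem card_RL_ge_loopCount (G : OrientedGraph) (hqa : G.QuasiAcyclic)
    (hpb : G.TwoPathBounded) (hme : ¬ G.HasMultipleEdges) (htr : ¬ G.HasTriangle)
    (R : Finset (List G.E × List G.E)) (hR : G.IsComplete R) :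
    G.loopCount ≤
      Set.ncard {r : List G.E × List G.E | r ∈ R ∧ G.AllLoops r} :=
  card_RL_ge_loopCount_general G hqa R hR
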